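/- arXiv:math/0408195 — 2 statements merged into one kernel-verified Lean document; each statement's English description precedes it below -/
import Mathlib

section
/- Let T > 0 and let k : ℝ → ℝ be continuously differentiable on [0, T] with k(0) ≠ 0. If u : [0, T] → ℝ is continuous and ∫₀ᵗ k(t − s) u(s) ds = 0 for all t ∈ [0, T], then u(t) = 0 for all t ∈ [0, T]. -/
/-!
Let `U t = ∫₀ᵗ u`. Integrating by parts,
`0 = ∫₀ᵗ k(t-s) u(s) ds = k(0) U(t) + ∫₀ᵗ k'(t-s) U(s) ds`,
so `|U t| ≤ (M / |k 0|) ∫₀ᵗ |U|` where `M` bounds `|k'|` on `[0, T]`. Grönwall's inequality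
forces `U = 0` on `[0, T]`, hence `u = U' = 0` there. Extending `u` continuously from `[0, T]` to `ℝ`
first makes `U` differentiable everywhere.
-/

open Set MeasureTheory intervalIntegral

theorem eq_zero_of_norm_le_mul_integral_norm {E : Type*} [NormedAddCommGroup E] {f : ℝ → E}
    {a b C : ℝ} (hf : Continuous f)
    (hbound : ∀ t ∈ Icc a b, ‖f t‖ ≤ C * ∫ s in a..t, ‖f s‖) :
    ∀ t ∈ Icc a b, f t = 0 := by
  set g : ℝ → ℝ := fun t => ∫ s in a..t, ‖f s‖
  have hg : ∀ t, HasDerivAt g ‖f t‖ t := fun t =>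
    hf.norm.integral_hasStrictDerivAt a t |>.hasDerivAt
  have hg_nonneg : ∀ t ∈ Icc a b, 0 ≤ g t := fun t ht =>
    integral_nonneg ht.1 fun s _ => norm_nonneg _
  have hg_zero : ∀ t ∈ Icc a b, g t = 0 := by
    refine eq_zero_of_abs_deriv_le_mul_abs_self_of_eq_zero_right (K := C)
      (fun t _ => (hg t).continuousAt.continuousWithinAt) (fun t _ => (hg t).hasDerivWithinAt)
      integral_same fun t ht => ?_
    rw [norm_norm, Real.norm_of_nonneg (hg_nonneg t (Ico_subset_Icc_self ht))]
    exact hbound t (Ico_subset_Icc_self ht)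
  intro t ht
  have := hbound t ht
  rwa [show (∫ s in a..t, ‖f s‖) = 0 from hg_zero t ht, mul_zero, norm_le_zero_iff] at this

theorem eq_zero_of_forall_integral_eq_zero {E : Type*} [NormedAddCommGroup E] [NormedSpace ℝ E]
    [CompleteSpace E] {v : ℝ → E} {a b : ℝ} (hab : a < b) (hv : Continuous v)
    (h : ∀ t ∈ Icc a b, ∫ s in a..t, v s = 0) :
    ∀ t ∈ Icc a b, v t = 0 := by
  intro t ht
  have hunique : UniqueDiffWithinAt ℝ (Icc a b) t := uniqueDiffOn_Icc hab t ht
  have hprim : HasDerivWithinAt (fun t => ∫ s in a..t, v s) (v t) (Icc a b) t :=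
    (hv.integral_hasStrictDerivAt a t).hasDerivAt.hasDerivWithinAt
  have hzero : HasDerivWithinAt (fun t => ∫ s in a..t, v s) 0 (Icc a b) t :=
    (hasDerivWithinAt_const t _ 0).congr h (h t ht)
  exact hunique.eq_deriv _ hprim hzero

theorem integral_comp_sub_mul_eq_mul_primitive_add {k k' v : ℝ → ℝ} {t : ℝ}
    (hk : ∀ x ∈ uIcc 0 t, HasDerivAt k (k' x) x) (hk' : IntervalIntegrable k' volume 0 t)
    (hv : Continuous v) :
    ∫ s in 0..t, k (t - s) * v s =
      k 0 * (∫ s in 0..t, v s) + ∫ s in 0..t, k' (t - s) * ∫ r in 0..s, v r := by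
  have hkt : ∀ s ∈ uIcc 0 t, HasDerivAt (fun s => k (t - s)) (-k' (t - s)) s := by
    intro s hs
    have hts : t - s ∈ uIcc 0 t := by
      simpa [image_const_sub_uIcc, uIcc_comm] using mem_image_of_mem (t - ·) hs
    simpa [Function.comp_def] using (hk (t - s) hts).comp s ((hasDerivAt_id s).const_sub t)
  have hkt' : IntervalIntegrable (fun s => -k' (t - s)) volume 0 t := by
    refine IntervalIntegrable.neg (f := fun s => k' (t - s)) ?_
    simpa using (hk'.comp_sub_left t).symm
  rw [integral_mul_deriv_eq_deriv_mul hkt (fun s _ => (hv.integral_hasStrictDerivAt 0 s).hasDerivAt)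
    hkt' (hv.intervalIntegrable 0 t)]
  simp [intervalIntegral.integral_neg]

theorem norm_mul_norm_primitive_le_of_integral_comp_sub_mul_eq_zero {k k' v : ℝ → ℝ} {t M : ℝ}
    (ht : 0 ≤ t) (hk : ∀ x ∈ Icc 0 t, HasDerivAt k (k' x) x)
    (hk' : IntervalIntegrable k' volume 0 t) (hM : ∀ x ∈ Icc 0 t, ‖k' x‖ ≤ M)
    (hv : Continuous v) (h : ∫ s in 0..t, k (t - s) * v s = 0) :
    ‖k 0‖ * ‖∫ s in 0..t, v s‖ ≤ M * ∫ s in 0..t, ‖∫ r in 0..s, v r‖ := by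
  rw [uIcc_of_le ht |>.symm] at hk
  have hsplit := integral_comp_sub_mul_eq_mul_primitive_add hk hk' hv
  rw [h, eq_comm, add_eq_zero_iff_eq_neg] at hsplit
  have hprim : Continuous fun s => ∫ r in 0..s, v r :=
    continuous_primitive (fun _ _ => hv.intervalIntegrable _ _) 0
  rw [← norm_mul, hsplit, norm_neg, ← intervalIntegral.integral_const_mul]
  refine norm_integral_le_of_norm_le ht (ae_of_all _ fun s hs => ?_)
    ((hprim.norm.const_mul M).intervalIntegrable 0 t)
  rw [norm_mul]
  exact mul_le_mul_of_nonneg_right (hM _ ⟨by linarith [hs.2], by linarith [hs.1]⟩) (norm_nonneg _)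

/-- Injectivity of the Volterra convolution operator with a `C¹` kernel not vanishing at `0`:
if `u` is continuous on `[0,T]` and `∫₀ᵗ k(t-s) u(s) ds = 0` on `[0,T]`, then `u ≡ 0`. -/
theorem convolution_operator_injective
    (T : ℝ) (hT : 0 < T) (k k' : ℝ → ℝ)
    (hk : ∀ t ∈ Set.Icc (0 : ℝ) T, HasDerivAt k (k' t) t)
    (hk' : ContinuousOn k' (Set.Icc 0 T))
    (hk0 : k 0 ≠ 0)
    (u : ℝ → ℝ) (hu : ContinuousOn u (Set.Icc 0 T))
    (heq : ∀ t ∈ Set.Icc (0 : ℝ) T, ∫ s in (0 : ℝ)..t, k (t - s) * u s = 0) :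
    ∀ t ∈ Set.Icc (0 : ℝ) T, u t = 0 := by
  set v := IccExtend hT.le ((Icc 0 T).domRestrict u)
  have hv : Continuous v := continuous_IccExtend_iff.2 hu.domRestrict
  have hvu : EqOn v u (Icc 0 T) := fun t ht => IccExtend_of_mem _ _ ht
  obtain ⟨M, hM⟩ := isCompact_Icc.exists_bound_of_continuousOn hk'
  have hprim : ∀ t ∈ Icc 0 T,
      ‖∫ s in 0..t, v s‖ ≤ M / ‖k 0‖ * ∫ s in 0..t, ‖∫ r in 0..s, v r‖ := by
    intro t ht
    have hsub : Icc 0 t ⊆ Icc 0 T := Icc_subset_Icc_right ht.2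
    have hconv : ∫ s in 0..t, k (t - s) * v s = 0 := by
      refine (intervalIntegral.integral_congr fun s hs => ?_).trans (heq t ht)
      rw [uIcc_of_le ht.1] at hs
      simp only [hvu (hsub hs)]
    rw [div_mul_eq_mul_div, le_div_iff₀' (norm_pos_iff.2 hk0)]
    exact norm_mul_norm_primitive_le_of_integral_comp_sub_mul_eq_zero ht.1
      (fun x hx => hk x (hsub hx)) ((hk'.mono hsub).intervalIntegrable_of_Icc ht.1)
      (fun x hx => hM x (hsub hx)) hv hconv
  have hprim_zero := eq_zero_of_norm_le_mul_integral_norm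
    (continuous_primitive (fun _ _ => hv.intervalIntegrable _ _) 0) hprim
  exact fun t ht => hvu ht ▸ eq_zero_of_forall_integral_eq_zero hT hv hprim_zero t ht
end

section
/- Let T > 0, let k : ℝ → ℝ be continuously differentiable on [0, T] with k(0) = 1 and |k'(t)| ≤ M on [0, T]. Let u : [0, T] → ℝ be continuous and set f(t) = ∫₀ᵗ k(t − s) u(s) ds. Suppose g : [0, T] → ℝ is continuous with |g(t) − f'(t)| ≤ ε for all t ∈ [0, T] for some ε > 0 (g plays the role of the stably differentiated noisy data R(δ)f_δ). If u_δ : [0, T] → ℝ is the (unique) continuous solution of u_δ(t) + ∫₀ᵗ k'(t − s) u_δ(s) ds = g(t), then sup_{[0,T]} |u_δ(t) − u(t)| ≤ ε e^{M T}. In particular, if ε = (2 M₂ δ)^{1/2} (from an optimal stable differentiation of data with noise level δ and ‖f''‖_∞ ≤ M₂), then ‖u_δ − u‖_∞ ≤ e^{MT} (2 M₂ δ)^{1/2} → 0 as δ → 0. -/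
open Set MeasureTheory intervalIntegral Real

/-- Error estimate for the deconvolution scheme `u_δ = (I+S)⁻¹ R(δ) f_δ`:
with `f = k ⋆ u`, `k(0) = 1`, `|k'| ≤ M` on `[0,T]`, if `g` approximates `f'` within `ε`
on `[0,T]` and `u_δ` solves the second-kind Volterra equation
`u_δ(t) + ∫₀ᵗ k'(t-s) u_δ(s) ds = g(t)`, then `‖u_δ - u‖_∞ ≤ ε e^{MT}`.
In particular, for `ε = √(2 M₂ δ)` one gets `‖u_δ - u‖_∞ ≤ e^{MT} √(2 M₂ δ)`. -/
theorem deconvolution_error_estimate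
    (T : ℝ) (hT : 0 < T) (k k' : ℝ → ℝ)
    (hk : ∀ t ∈ Set.Icc (0 : ℝ) T, HasDerivAt k (k' t) t)
    (hk'c : ContinuousOn k' (Set.Icc 0 T))
    (hk0 : k 0 = 1)
    (M : ℝ) (hkM : ∀ t ∈ Set.Icc (0 : ℝ) T, |k' t| ≤ M)
    (u : ℝ → ℝ) (hu : ContinuousOn u (Set.Icc 0 T))
    (f f' : ℝ → ℝ)
    (hf : ∀ t ∈ Set.Icc (0 : ℝ) T, f t = ∫ s in (0 : ℝ)..t, k (t - s) * u s)
    (hf' : ∀ t ∈ Set.Icc (0 : ℝ) T, HasDerivAt f (f' t) t)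
    (g : ℝ → ℝ) (hg : ContinuousOn g (Set.Icc 0 T))
    (ε : ℝ) (hε : 0 < ε)
    (hgf' : ∀ t ∈ Set.Icc (0 : ℝ) T, |g t - f' t| ≤ ε)
    (uδ : ℝ → ℝ) (huδ : ContinuousOn uδ (Set.Icc 0 T))
    (heq : ∀ t ∈ Set.Icc (0 : ℝ) T, uδ t + ∫ s in (0 : ℝ)..t, k' (t - s) * uδ s = g t) :
    (∀ t ∈ Set.Icc (0 : ℝ) T, |uδ t - u t| ≤ ε * Real.exp (M * T)) ∧
    (∀ M₂ δ : ℝ, ε = Real.sqrt (2 * M₂ * δ) →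
      ∀ t ∈ Set.Icc (0 : ℝ) T, |uδ t - u t| ≤ Real.exp (M * T) * Real.sqrt (2 * M₂ * δ)) := by
  classical
  have hT' : (0:ℝ) ≤ T := hT.le
  have hM0 : (0:ℝ) ≤ M := le_trans (abs_nonneg _) (hkM 0 ⟨le_refl _, hT'⟩)
  -- projection onto [0,T] and extended continuous functions
  set p : ℝ → ℝ := fun x => max 0 (min x T) with hpdef
  have hpc : Continuous p := continuous_const.max (continuous_id.min continuous_const)
  have hpmem : ∀ x, p x ∈ Icc (0:ℝ) T := fun x => ⟨le_max_left _ _, max_le hT' (min_le_right _ _)⟩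
  have hpeq : ∀ x ∈ Icc (0:ℝ) T, p x = x := fun x hx => by
    simp only [hpdef]; rw [min_eq_left hx.2, max_eq_right hx.1]
  set K' : ℝ → ℝ := fun x => k' (p x) with hK'def
  set U : ℝ → ℝ := fun x => u (p x) with hUdef
  set Uδ : ℝ → ℝ := fun x => uδ (p x) with hUδdef
  have hK'c : Continuous K' := hk'c.comp_continuous hpc hpmem
  have hUc : Continuous U := hu.comp_continuous hpc hpmem
  have hUδc : Continuous Uδ := huδ.comp_continuous hpc hpmem
  have hK'M : ∀ x, |K' x| ≤ M := fun x => hkM _ (hpmem x)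
  obtain ⟨Cu, hCu'⟩ := isCompact_Icc.exists_bound_of_continuousOn hu
  have hCu : ∀ x, |U x| ≤ Cu := fun x => hCu' _ (hpmem x)
  have hGc : Continuous fun q : ℝ × ℝ => K' (q.1 - q.2) * U q.2 :=
    (hK'c.comp (continuous_fst.sub continuous_snd)).mul (hUc.comp continuous_snd)
  have hkcont : ContinuousOn k (Icc 0 T) := fun x hx => ((hk x hx).continuousAt).continuousWithinAt
  -- Fubini on the triangle
  have key : ∀ t ∈ Icc (0:ℝ) T,
      (∫ s in (0:ℝ)..t, ∫ r in (0:ℝ)..s, K' (s - r) * U r)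
        = ∫ r in (0:ℝ)..t, (k (t - r) - 1) * U r := by
    intro t ht
    obtain ⟨ht0, htT⟩ := ht
    set H : ℝ × ℝ → ℝ :=
      fun q => Set.indicator {q : ℝ × ℝ | q.2 ≤ q.1} (fun q => K' (q.1 - q.2) * U q.2) q with hH
    have hHmeas : MeasurableSet {q : ℝ × ℝ | q.2 ≤ q.1} :=
      measurableSet_le measurable_snd measurable_fst
    have hHsm : StronglyMeasurable H := hGc.stronglyMeasurable.indicator hHmeas
    haveI : IsFiniteMeasure (volume.restrict (Ioc (0:ℝ) t)) :=
      ⟨by rw [Measure.restrict_apply_univ]; exact measure_Ioc_lt_top⟩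
    have hint : Integrable (Function.uncurry fun s r => H (s, r))
        ((volume.restrict (Ioc (0:ℝ) t)).prod (volume.restrict (Ioc (0:ℝ) t))) := by
      refine Integrable.mono' (integrable_const (M * Cu)) ?_ ?_
      · exact hHsm.aestronglyMeasurable
      · refine Filter.Eventually.of_forall fun q => ?_
        have h1 : ‖H (q.1, q.2)‖ ≤ ‖K' (q.1 - q.2) * U q.2‖ := by
          simpa using norm_indicator_le_norm_self
            (f := fun q : ℝ × ℝ => K' (q.1 - q.2) * U q.2) (s := {q : ℝ × ℝ | q.2 ≤ q.1}) (q.1, q.2)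
        refine h1.trans ?_
        rw [norm_mul, Real.norm_eq_abs, Real.norm_eq_abs]
        exact mul_le_mul (hK'M _) (hCu _) (abs_nonneg _) hM0
    have swap := MeasureTheory.integral_integral_swap hint
    -- identify LHS
    have lhs_eq : (∫ s in (0:ℝ)..t, ∫ r in (0:ℝ)..s, K' (s - r) * U r)
        = ∫ s in Ioc (0:ℝ) t, ∫ r in Ioc (0:ℝ) t, H (s, r) := by
      rw [intervalIntegral.integral_of_le ht0]
      refine setIntegral_congr_fun measurableSet_Ioc fun s hs => ?_
      have hs0 : (0:ℝ) ≤ s := hs.1.le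
      rw [intervalIntegral.integral_of_le hs0]
      have : ∀ r, H (s, r) = Set.indicator (Iic s) (fun r => K' (s - r) * U r) r := by
        intro r
        simp only [hH, Set.indicator_apply, Set.mem_setOf_eq, Set.mem_Iic]
      simp_rw [this]
      rw [setIntegral_indicator measurableSet_Iic]
      congr 1
      rw [Set.Ioc_inter_Iic, min_eq_right hs.2]
    -- identify RHS
    have rhs_eq : (∫ r in Ioc (0:ℝ) t, ∫ s in Ioc (0:ℝ) t, H (s, r))
        = ∫ r in (0:ℝ)..t, (k (t - r) - 1) * U r := by
      rw [intervalIntegral.integral_of_le ht0]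
      refine setIntegral_congr_fun measurableSet_Ioc fun r hr => ?_
      have hr0 : (0:ℝ) < r := hr.1
      have hrt : r ≤ t := hr.2
      have : ∀ s, H (s, r) = Set.indicator (Ici r) (fun s => K' (s - r) * U r) s := by
        intro s
        simp only [hH, Set.indicator_apply, Set.mem_setOf_eq, Set.mem_Ici]
      simp_rw [this]
      rw [setIntegral_indicator measurableSet_Ici]
      have hset : Ioc (0:ℝ) t ∩ Ici r = Icc r t := by
        ext x
        simp only [Set.mem_inter_iff, Set.mem_Ioc, Set.mem_Ici, Set.mem_Icc]
        constructor
        · rintro ⟨⟨_, h2⟩, h3⟩; exact ⟨h3, h2⟩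
        · rintro ⟨h1, h2⟩; exact ⟨⟨lt_of_lt_of_le hr0 h1, h2⟩, h1⟩
      rw [hset, integral_Icc_eq_integral_Ioc, ← intervalIntegral.integral_of_le hrt,
        intervalIntegral.integral_mul_const]
      have hcomp : (∫ s in r..t, K' (s - r)) = ∫ x in (0:ℝ)..(t - r), K' x := by
        rw [intervalIntegral.integral_comp_sub_right (fun x => K' x) r, sub_self]
      have htr0 : (0:ℝ) ≤ t - r := sub_nonneg.mpr hrt
      have hsub : uIcc (0:ℝ) (t - r) ⊆ Icc 0 T := by
        rw [uIcc_of_le htr0]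
        exact Icc_subset_Icc le_rfl (le_trans (by linarith) htT)
      have hcongr : (∫ x in (0:ℝ)..(t - r), K' x) = ∫ x in (0:ℝ)..(t - r), k' x := by
        refine intervalIntegral.integral_congr fun x hx => ?_
        simp only [hK'def]
        rw [hpeq x (hsub hx)]
      have hftc : (∫ x in (0:ℝ)..(t - r), k' x) = k (t - r) - k 0 :=
        intervalIntegral.integral_eq_sub_of_hasDerivAt
          (fun x hx => hk x (hsub hx))
          ((hk'c.mono hsub).intervalIntegrable)
      rw [hcomp, hcongr, hftc, hk0]
    rw [lhs_eq, swap, rhs_eq]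
  -- the function h := U + S U and its properties
  set h : ℝ → ℝ := fun s => U s + ∫ r in (0:ℝ)..s, K' (s - r) * U r with hhdef
  have hSc : Continuous fun s => ∫ r in (0:ℝ)..s, K' (s - r) * U r := by
    have := intervalIntegral.continuous_parametric_intervalIntegral_of_continuous
      (μ := volume) (f := fun s r => K' (s - r) * U r) (a₀ := 0)
      (by exact hGc) (s := fun x : ℝ => x) continuous_id
    exact this
  have hhc : Continuous h := hUc.add hSc
  -- f = ∫ h on [0,T]
  have hfeq : ∀ t ∈ Icc (0:ℝ) T, f t = ∫ s in (0:ℝ)..t, h s := by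
    intro t ht
    have hint1 : IntervalIntegrable U volume 0 t := hUc.intervalIntegrable _ _
    have hint2 : IntervalIntegrable (fun s => ∫ r in (0:ℝ)..s, K' (s - r) * U r) volume 0 t :=
      hSc.intervalIntegrable _ _
    have h1 : (∫ s in (0:ℝ)..t, h s)
        = (∫ s in (0:ℝ)..t, U s) + ∫ s in (0:ℝ)..t, ∫ r in (0:ℝ)..s, K' (s - r) * U r :=
      intervalIntegral.integral_add hint1 hint2
    have hint3 : IntervalIntegrable (fun r => (k (t - r) - 1) * U r) volume 0 t := by
      apply ContinuousOn.intervalIntegrable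
      have hsub : uIcc (0:ℝ) t ⊆ Icc 0 T := by
        rw [uIcc_of_le ht.1]; exact Icc_subset_Icc le_rfl ht.2
      refine ContinuousOn.mul (ContinuousOn.sub ?_ continuousOn_const) hUc.continuousOn
      refine hkcont.comp ((continuous_const.sub continuous_id).continuousOn) ?_
      intro r hr
      have hr' := hsub hr
      rw [uIcc_of_le ht.1] at hr
      show t - id r ∈ Icc 0 T
      simp only [id_eq]
      exact ⟨by linarith [hr.2], by linarith [hr.1, ht.2]⟩
    rw [h1, key t ht, ← intervalIntegral.integral_add hint1 hint3, hf t ht]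
    refine intervalIntegral.integral_congr fun r hr => ?_
    have hsub : uIcc (0:ℝ) t ⊆ Icc 0 T := by
      rw [uIcc_of_le ht.1]; exact Icc_subset_Icc le_rfl ht.2
    have hUr : U r = u r := by simp only [hUdef]; rw [hpeq r (hsub hr)]
    rw [hUr]; ring
  -- f' = h on [0,T]
  have hf'h : ∀ t ∈ Icc (0:ℝ) T, f' t = h t := by
    intro t ht
    have hH : HasDerivWithinAt (fun x => ∫ s in (0:ℝ)..x, h s) (h t) (Icc 0 T) t :=
      ((hhc.integral_hasStrictDerivAt 0 t).hasDerivAt).hasDerivWithinAt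
    have hF : HasDerivWithinAt f (h t) (Icc 0 T) t :=
      hH.congr (fun x hx => hfeq x hx) (hfeq t ht)
    have hF' : HasDerivWithinAt f (f' t) (Icc 0 T) t := (hf' t ht).hasDerivWithinAt
    exact (uniqueDiffOn_Icc hT t ht).eq_deriv _ hF' hF
  -- u satisfies the same Volterra equation with rhs h (in extended form)
  have huh : ∀ t, U t + ∫ s in (0:ℝ)..t, K' (t - s) * U s = h t := fun t => rfl
  -- extended form of the equation for uδ
  have heqδ : ∀ t ∈ Icc (0:ℝ) T, Uδ t + ∫ s in (0:ℝ)..t, K' (t - s) * Uδ s = g t := by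
    intro t ht
    have hsub : uIcc (0:ℝ) t ⊆ Icc 0 T := by
      rw [uIcc_of_le ht.1]; exact Icc_subset_Icc le_rfl ht.2
    have h1 : (∫ s in (0:ℝ)..t, K' (t - s) * Uδ s) = ∫ s in (0:ℝ)..t, k' (t - s) * uδ s := by
      refine intervalIntegral.integral_congr fun s hs => ?_
      have hs' := hsub hs
      rw [uIcc_of_le ht.1] at hs
      have hts : t - s ∈ Icc (0:ℝ) T := ⟨by linarith [hs.2], by linarith [hs.1, ht.2]⟩
      simp only [hK'def, hUδdef]
      rw [hpeq _ hts, hpeq _ hs']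
    have h2 : Uδ t = uδ t := by simp only [hUδdef]; rw [hpeq t ht]
    rw [h1, h2]; exact heq t ht
  -- the error function w and its integral φ
  set w : ℝ → ℝ := fun x => Uδ x - U x with hwdef
  have hwc : Continuous w := hUδc.sub hUc
  set φ : ℝ → ℝ := fun x => ∫ s in (0:ℝ)..x, |w s| with hφdef
  have hφderiv : ∀ x, HasDerivAt φ (|w x|) x := fun x =>
    ((hwc.abs.integral_hasStrictDerivAt 0 x).hasDerivAt)
  have hφc : Continuous φ :=
    intervalIntegral.continuous_primitive (fun a b => (hwc.abs).intervalIntegrable a b) 0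
  have hφnonneg : ∀ x ∈ Icc (0:ℝ) T, 0 ≤ φ x := fun x hx =>
    intervalIntegral.integral_nonneg hx.1 (fun s _ => abs_nonneg _)
  -- the key pointwise bound
  have hwbound : ∀ x ∈ Icc (0:ℝ) T, |w x| ≤ ε + M * φ x := by
    intro x hx
    have e1 := heqδ x hx
    have e2 := huh x
    have hKw : ∀ s, K' (x - s) * Uδ s - K' (x - s) * U s = K' (x - s) * w s := by
      intro s; simp only [hwdef]; ring
    have hintδ : IntervalIntegrable (fun s => K' (x - s) * Uδ s) volume 0 x :=
      (((hK'c.comp (continuous_const.sub continuous_id)).mul hUδc)).intervalIntegrable _ _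
    have hintu : IntervalIntegrable (fun s => K' (x - s) * U s) volume 0 x :=
      (((hK'c.comp (continuous_const.sub continuous_id)).mul hUc)).intervalIntegrable _ _
    have hwx : w x = (g x - f' x) - ∫ s in (0:ℝ)..x, K' (x - s) * w s := by
      have hsubint : (∫ s in (0:ℝ)..x, K' (x - s) * w s)
          = (∫ s in (0:ℝ)..x, K' (x - s) * Uδ s) - ∫ s in (0:ℝ)..x, K' (x - s) * U s := by
        rw [← intervalIntegral.integral_sub hintδ hintu]
        exact intervalIntegral.integral_congr fun s _ => (hKw s).symm
      rw [hsubint, hf'h x hx, ← e1, ← e2]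
      simp only [hwdef]; ring
    have habs1 : |g x - f' x| ≤ ε := hgf' x hx
    have habs2 : |∫ s in (0:ℝ)..x, K' (x - s) * w s| ≤ M * φ x := by
      refine le_trans (intervalIntegral.abs_integral_le_integral_abs hx.1) ?_
      have hmono : (∫ s in (0:ℝ)..x, |K' (x - s) * w s|)
          ≤ ∫ s in (0:ℝ)..x, M * |w s| := by
        refine intervalIntegral.integral_mono_on hx.1 ?_ ?_ ?_
        · exact (((hK'c.comp (continuous_const.sub continuous_id)).mul hwc).abs).intervalIntegrable _ _
        · exact (continuous_const.mul hwc.abs).intervalIntegrable _ _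
        · intro s _
          rw [abs_mul]
          exact mul_le_mul_of_nonneg_right (hK'M _) (abs_nonneg _)
      refine hmono.trans ?_
      rw [intervalIntegral.integral_const_mul]
    calc |w x| = |(g x - f' x) - ∫ s in (0:ℝ)..x, K' (x - s) * w s| := by rw [hwx]
      _ ≤ |g x - f' x| + |∫ s in (0:ℝ)..x, K' (x - s) * w s| := abs_sub _ _
      _ ≤ ε + M * φ x := add_le_add habs1 habs2
  -- Grönwall
  have grb : ∀ x ∈ Icc (0:ℝ) T, ‖φ x‖ ≤ gronwallBound 0 M ε (x - 0) := by
    refine norm_le_gronwallBound_of_norm_deriv_right_le (f := φ) (f' := fun x => |w x|)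
      hφc.continuousOn (fun x _ => (hφderiv x).hasDerivWithinAt) ?_ ?_
    · simp only [hφdef, intervalIntegral.integral_same, norm_zero, le_refl]
    · intro x hx
      have hb := hwbound x ⟨hx.1, hx.2.le⟩
      have : ‖φ x‖ = φ x := Real.norm_of_nonneg (hφnonneg x ⟨hx.1, hx.2.le⟩)
      rw [Real.norm_eq_abs, abs_abs, this]
      linarith
  have main : ∀ t ∈ Icc (0:ℝ) T, |uδ t - u t| ≤ ε * Real.exp (M * T) := by
    intro t ht
    have hwt : uδ t - u t = w t := by
      simp only [hwdef, hUδdef, hUdef]; rw [hpeq t ht]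
    have h1 : |w t| ≤ ε + M * φ t := hwbound t ht
    have h2 : φ t ≤ gronwallBound 0 M ε t := by
      have := grb t ht
      rwa [Real.norm_of_nonneg (hφnonneg t ht), sub_zero] at this
    have h3 : ε + M * φ t ≤ ε + M * gronwallBound 0 M ε t := by
      have := mul_le_mul_of_nonneg_left h2 hM0
      linarith
    have h4 : ε + M * gronwallBound 0 M ε t ≤ ε * Real.exp (M * T) := by
      rcases eq_or_lt_of_le hM0 with hM | hM
      · rw [← hM]
        simp [gronwallBound_K0]
      · rw [gronwallBound_of_K_ne_0 (ne_of_gt hM)]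
        have hexp : Real.exp (M * t) ≤ Real.exp (M * T) :=
          Real.exp_le_exp.2 (mul_le_mul_of_nonneg_left ht.2 hM0)
        have : ε + M * (0 * Real.exp (M * t) + ε / M * (Real.exp (M * t) - 1))
            = ε * Real.exp (M * t) := by
          field_simp
          ring
        rw [this]
        exact mul_le_mul_of_nonneg_left hexp hε.le
    rw [hwt]
    linarith
  refine ⟨main, fun M₂ δ hεeq t ht => ?_⟩
  rw [← hεeq, mul_comm]
  exact main t ht
end
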